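/- Mixed-monotonicity reachability via sensitivity bounds (Lemma 9): let x̲ ≤ x̄ in ℝⁿ and let Φ : [x̲,x̄] → ℝⁿ be differentiable on the box with Jacobian DΦ(x) ∈ ℝ^{n×n} satisfying S̲ ≤ DΦ(x) ≤ S̄ entrywise for all x ∈ [x̲,x̄]. Let S* = (S̲ + S̄)/2. For each i ∈ {1,…,n} and x, y ∈ ℝⁿ define z^i(x,y) ∈ ℝⁿ and α^i ∈ ℝ^{1×n} componentwise by: (z^i_j, α^i_j) = (x_j, max(0, −S̲_{ij})) if S*_{ij} ≥ 0, and (z^i_j, α^i_j) = (y_j, max(0, S̄_{ij})) if S*_{ij} < 0; and set g_i(x,y) = Φ_i(z^i(x,y)) + α^i (x − y). Then for every w ∈ [x̲,x̄] and every i ∈ {1,…,n}: g_i(x̲, x̄) ≤ Φ_i(w) ≤ g_i(x̄, x̲). -/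

import Mathlib

/-! By the mean value theorem on the box, `Φ_i u - Φ_i v = Σ_j ∂_jΦ_i(ξ) (u_j - v_j)` for some `ξ`
in the box. If every `u_j - v_j` has the sign of `S*_{ij}`, bounding `∂_jΦ_i(ξ)` by `S̲_{ij}` or
`S̄_{ij}` and `|u_j - v_j|` by `x̄_j - x̲_j` bounds each term below by `α^i_j (x̲_j - x̄_j)`.
The vertex `z^i` is chosen exactly so that `(u, v) = (w, z^i(x̲,x̄))` and `(z^i(x̄,x̲), w)` have
this sign pattern, which gives the lower and the upper bound. -/

/-- The vertex `z^i(x,y)` of the mixed-monotonicity decomposition: component `j` is `x_j`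
if `S*_{ij} = (S̲_{ij}+S̄_{ij})/2 ≥ 0`, and `y_j` otherwise. -/
noncomputable def mmVertex {n : ℕ} (Sl Su : Fin n → Fin n → ℝ) (i : Fin n) (x y : Fin n → ℝ) :
    Fin n → ℝ :=
  fun j => if 0 ≤ (Sl i j + Su i j) / 2 then x j else y j

/-- The coefficient row vector `α^i` of the mixed-monotonicity decomposition: component `j`
is `max(0, −S̲_{ij})` if `S*_{ij} = (S̲_{ij}+S̄_{ij})/2 ≥ 0`, and `max(0, S̄_{ij})`
otherwise. -/
noncomputable def mmAlpha {n : ℕ} (Sl Su : Fin n → Fin n → ℝ) (i j : Fin n) : ℝ :=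
  if 0 ≤ (Sl i j + Su i j) / 2 then max 0 (-Sl i j) else max 0 (Su i j)

/-- The decomposition function `g_i(x,y) = Φ_i(z^i(x,y)) + α^i (x − y)`. -/
noncomputable def mmG {n : ℕ} (Φ : (Fin n → ℝ) → Fin n → ℝ) (Sl Su : Fin n → Fin n → ℝ)
    (i : Fin n) (x y : Fin n → ℝ) : ℝ :=
  Φ (mmVertex Sl Su i x y) i + ∑ j : Fin n, mmAlpha Sl Su i j * (x j - y j)

theorem ContinuousLinearMap.apply_eq_sum_apply_single_mul {n : ℕ} (L : (Fin n → ℝ) →L[ℝ] ℝ)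
    (v : Fin n → ℝ) : L v = ∑ j, L (Pi.single j 1) * v j := by
  conv_lhs => rw [← Finset.univ_sum_single v]
  refine (map_sum L _ _).trans (Finset.sum_congr rfl fun j _ => ?_)
  rw [mul_comm, ← smul_eq_mul, ← map_smul, ← Pi.single_smul, smul_eq_mul, mul_one]

theorem Convex.le_image_sub_of_le_hasFDerivWithinAt {E : Type*} [NormedAddCommGroup E]
    [NormedSpace ℝ E] {f : E → ℝ} {s : Set E} (hs : Convex ℝ s) {x y : E} (hx : x ∈ s)
    (hy : y ∈ s) {c : ℝ}
    (hf : ∀ z ∈ s, ∃ f' : E →L[ℝ] ℝ, HasFDerivWithinAt f f' s z ∧ c ≤ f' (y - x)) :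
    c ≤ f y - f x := by
  choose! f' hf' hc using hf
  obtain ⟨z, hz, heq⟩ := domain_mvt hf' hs hx hy
  exact heq ▸ hc z (hs.segment_subset hx hy hz)

theorem max_zero_neg_mul_sub_le_mul {l s d a b : ℝ} (hs : l ≤ s) (hd : 0 ≤ d) (hdb : d ≤ b - a) :
    max 0 (-l) * (a - b) ≤ s * d := by
  rcases le_total 0 l with hl | hl
  · rw [max_eq_left (neg_nonpos.2 hl)]
    nlinarith
  · rw [max_eq_right (neg_nonneg.2 hl)]
    nlinarith

namespace MixedMonotonicity

variable {n : ℕ} {Sl Su : Fin n → Fin n → ℝ} {i : Fin n} {xl xu : Fin n → ℝ}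

theorem mmVertex_mem_Icc {x y : Fin n → ℝ} (hx : x ∈ Set.Icc xl xu) (hy : y ∈ Set.Icc xl xu) :
    mmVertex Sl Su i x y ∈ Set.Icc xl xu := by
  constructor <;> intro j <;> unfold mmVertex <;> split_ifs
  exacts [hx.1 j, hy.1 j, hx.2 j, hy.2 j]

theorem mmAlpha_mul_sub_le {j : Fin n} {s d a b : ℝ} (hsl : Sl i j ≤ s) (hsu : s ≤ Su i j)
    (hd : |d| ≤ b - a) (hpos : 0 ≤ (Sl i j + Su i j) / 2 → 0 ≤ d)
    (hneg : (Sl i j + Su i j) / 2 < 0 → d ≤ 0) : mmAlpha Sl Su i j * (a - b) ≤ s * d := by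
  unfold mmAlpha
  split_ifs with h
  · exact max_zero_neg_mul_sub_le_mul hsl (hpos h) (le_of_abs_le hd)
  · have := max_zero_neg_mul_sub_le_mul (neg_le_neg hsu) (neg_nonneg.2 (hneg (not_le.1 h)))
      (neg_le.1 (abs_le.1 hd).1)
    rwa [neg_neg, neg_mul_neg] at this

theorem sum_mmAlpha_mul_sub_le {f : (Fin n → ℝ) → ℝ}
    (hf : ∀ x ∈ Set.Icc xl xu, ∃ L : (Fin n → ℝ) →L[ℝ] ℝ,
      HasFDerivWithinAt f L (Set.Icc xl xu) x ∧
        ∀ j, Sl i j ≤ L (Pi.single j 1) ∧ L (Pi.single j 1) ≤ Su i j)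
    {u v : Fin n → ℝ} (hu : u ∈ Set.Icc xl xu) (hv : v ∈ Set.Icc xl xu)
    (hpos : ∀ j, 0 ≤ (Sl i j + Su i j) / 2 → v j ≤ u j)
    (hneg : ∀ j, (Sl i j + Su i j) / 2 < 0 → u j ≤ v j) :
    ∑ j, mmAlpha Sl Su i j * (xl j - xu j) ≤ f u - f v := by
  refine (convex_Icc xl xu).le_image_sub_of_le_hasFDerivWithinAt hv hu fun x hx => ?_
  obtain ⟨L, hL, hLS⟩ := hf x hx
  refine ⟨L, hL, ?_⟩
  rw [L.apply_eq_sum_apply_single_mul]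
  refine Finset.sum_le_sum fun j _ => mmAlpha_mul_sub_le (hLS j).1 (hLS j).2 ?_
    (fun h => sub_nonneg.2 (hpos j h)) (fun h => sub_nonpos.2 (hneg j h))
  exact Real.dist_eq (u j) (v j) ▸ Real.dist_le_of_mem_Icc ⟨hu.1 j, hu.2 j⟩ ⟨hv.1 j, hv.2 j⟩

end MixedMonotonicity

open MixedMonotonicity in
/-- **Mixed-monotonicity reachability via sensitivity bounds** (Lemma 9).
If `Φ : [x̲,x̄] → ℝⁿ` is differentiable on the box with Jacobian bounded entrywise by
`S̲ ≤ DΦ(x) ≤ S̄` for all `x` in the box, then with the decomposition function `g` built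
from `[S̲,S̄]`, every `w ∈ [x̲,x̄]` satisfies `g(x̲,x̄) ≤ Φ(w) ≤ g(x̄,x̲)` componentwise. -/
theorem mixed_monotonicity_reachability {n : ℕ}
    (xl xu : Fin n → ℝ) (hx : xl ≤ xu)
    (Φ : (Fin n → ℝ) → Fin n → ℝ)
    (Sl Su : Fin n → Fin n → ℝ)
    (hΦ : ∀ x ∈ Set.Icc xl xu, ∀ i : Fin n,
      ∃ L : (Fin n → ℝ) →L[ℝ] ℝ,
        HasFDerivWithinAt (fun w => Φ w i) L (Set.Icc xl xu) x ∧
        ∀ j, Sl i j ≤ L (Pi.single j 1) ∧ L (Pi.single j 1) ≤ Su i j) :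
    ∀ w ∈ Set.Icc xl xu, ∀ i : Fin n,
      mmG Φ Sl Su i xl xu ≤ Φ w i ∧ Φ w i ≤ mmG Φ Sl Su i xu xl := by
  intro w hw i
  have hl : xl ∈ Set.Icc xl xu := ⟨le_rfl, hx⟩
  have hu : xu ∈ Set.Icc xl xu := ⟨hx, le_rfl⟩
  have hlower := sum_mmAlpha_mul_sub_le (fun x hx => hΦ x hx i) hw
    (mmVertex_mem_Icc (Sl := Sl) (Su := Su) (i := i) hl hu)
    (fun j h => by simpa [mmVertex, h] using hw.1 j)
    (fun j h => by simpa [mmVertex, not_le.2 h] using hw.2 j)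
  have hupper := sum_mmAlpha_mul_sub_le (fun x hx => hΦ x hx i)
    (mmVertex_mem_Icc (Sl := Sl) (Su := Su) (i := i) hu hl) hw
    (fun j h => by simpa [mmVertex, h] using hw.2 j)
    (fun j h => by simpa [mmVertex, not_le.2 h] using hw.1 j)
  have hflip : ∑ j, mmAlpha Sl Su i j * (xu j - xl j)
      = -∑ j, mmAlpha Sl Su i j * (xl j - xu j) := by
    simp only [← Finset.sum_neg_distrib, ← mul_neg, neg_sub]
  unfold mmG
  constructor <;> linarith
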